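/- arXiv:2212.12984 — 3 statements merged into one kernel-verified Lean document; each statement's English description precedes it below -/
import Mathlib

section
/- Let u be twice continuously differentiable on [a,b] and s ∈ (a,b). Then the Hadamard finite-part integral ⨍ₐᵇ u(x)/(x-s)² dx, defined as F.P. lim_{ε→0⁺} [∫ₐ^{s-ε} u(x)/(x-s)² dx + ∫_{s+ε}^b u(x)/(x-s)² dx], equals ∫ₐᵇ ∫₀¹ (1-t) u''((1-t)s + tx) dt dx − u(s)(1/(b-s) + 1/(s-a)) + u'(s)·ln((b-s)/(s-a)). -/
/-!
Taylor's formula with integral remainder writes `u x = u s + u' s (x - s) + (x - s)² G x` with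
`G x = ∫₀¹ (1 - t) u''((1 - t) s + t x) dt` continuous on `[a, b]`. Dividing by `(x - s)²`, the
first two terms integrate explicitly away from `s`: they produce `2 u(s)/ε` (which is subtracted)
plus `ε`-independent terms, the logarithms `± u'(s) log ε` cancelling between the two sides. The
remaining `∫ G` over `[a, s - ε] ∪ [s + ε, b]` tends to `∫ₐᵇ G` since `G` is integrable.
-/

open MeasureTheory intervalIntegral Filter Topology Set

theorem mem_uIcc_of_convex_combination {s x t : ℝ} (ht : t ∈ Icc (0 : ℝ) 1) :
    (1 - t) * s + t * x ∈ uIcc s x := by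
  rw [← segment_eq_uIcc]
  exact ⟨1 - t, t, by linarith [ht.2], ht.1, by ring, by simp only [smul_eq_mul]⟩

theorem taylor_integral_remainder_two_of_hasDerivAt {f f' f'' : ℝ → ℝ} {s x : ℝ}
    (hf : ∀ y ∈ uIcc s x, HasDerivAt f (f' y) y)
    (hf' : ∀ y ∈ uIcc s x, HasDerivAt f' (f'' y) y)
    (hf'' : ContinuousOn f'' (uIcc s x)) :
    f x = f s + f' s * (x - s)
      + (x - s) ^ 2 * ∫ t in (0 : ℝ)..1, (1 - t) * f'' ((1 - t) * s + t * x) := by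
  set p : ℝ → ℝ := fun t => (1 - t) * s + t * x
  have hp_mem : ∀ t ∈ uIcc (0 : ℝ) 1, p t ∈ uIcc s x := fun t ht =>
    mem_uIcc_of_convex_combination (by rwa [uIcc_of_le zero_le_one] at ht)
  have hp : ∀ t, HasDerivAt p (x - s) t := fun t =>
    ((((hasDerivAt_id t).const_sub 1).mul_const s).add ((hasDerivAt_id t).mul_const x)).congr_deriv
      (by ring)
  have hprim : ∀ t ∈ uIcc (0 : ℝ) 1,
      HasDerivAt (fun t => f (p t) + (1 - t) * (x - s) * f' (p t))
        ((x - s) ^ 2 * ((1 - t) * f'' (p t))) t := fun t ht => by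
    have h1 : HasDerivAt (fun t => f (p t)) (f' (p t) * (x - s)) t :=
      (hf _ (hp_mem t ht)).comp t (hp t)
    have h2 : HasDerivAt (fun t => f' (p t)) (f'' (p t) * (x - s)) t :=
      (hf' _ (hp_mem t ht)).comp t (hp t)
    exact (h1.add ((((hasDerivAt_id t).const_sub 1).mul_const (x - s)).mul h2)).congr_deriv
      (by simp only [id]; ring)
  have hint : IntervalIntegrable (fun t => (x - s) ^ 2 * ((1 - t) * f'' (p t))) volume 0 1 :=
    ContinuousOn.intervalIntegrable <| continuousOn_const.mul <| (continuousOn_const.sub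
      continuousOn_id).mul (hf''.comp (by fun_prop) hp_mem)
  have hp0 : p 0 = s := by simp only [p]; ring
  have hp1 : p 1 = x := by simp only [p]; ring
  rw [← intervalIntegral.integral_const_mul, integral_eq_sub_of_hasDerivAt hprim hint, hp0, hp1]
  ring

theorem continuousOn_integral_comp_convex_combination {g : ℝ → ℝ} {a b s : ℝ}
    (hg : ContinuousOn g (Icc a b)) (hs : s ∈ Icc a b) :
    ContinuousOn (fun x => ∫ t in (0 : ℝ)..1, (1 - t) * g ((1 - t) * s + t * x)) (Icc a b) := by
  have hab : a ≤ b := hs.1.trans hs.2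
  set ĝ : ℝ → ℝ := fun y => g (projIcc a b hab y)
  have hĝ : Continuous ĝ :=
    hg.comp_continuous (continuous_subtype_val.comp continuous_projIcc) fun y => Subtype.prop _
  refine (continuous_parametric_intervalIntegral_of_continuous'
    (f := fun x t => (1 - t) * ĝ ((1 - t) * s + t * x)) (by fun_prop) 0 1).continuousOn.congr
    fun x hx => integral_congr fun t ht => ?_
  have hmem := uIcc_subset_Icc hs hx
    (mem_uIcc_of_convex_combination (by rwa [uIcc_of_le zero_le_one] at ht))
  simp only [ĝ, projIcc_of_mem hab hmem]

theorem integral_inv_sub {c d s : ℝ} (h : s ∉ uIcc c d) :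
    ∫ x in c..d, (x - s)⁻¹ = Real.log ((d - s) / (c - s)) := by
  rw [integral_comp_sub_right (fun x => x⁻¹), integral_inv]
  rw [← image_sub_const_uIcc]
  rintro ⟨x, hx, hx0⟩
  exact h (sub_eq_zero.1 hx0 ▸ hx)

theorem integral_inv_sub_sq {c d s : ℝ} (h : s ∉ uIcc c d) :
    ∫ x in c..d, ((x - s) ^ 2)⁻¹ = (c - s)⁻¹ - (d - s)⁻¹ := by
  have hne : ∀ x ∈ uIcc c d, x - s ≠ 0 := fun x hx => sub_ne_zero.2 (ne_of_mem_of_not_mem hx h)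
  have hderiv : ∀ x ∈ uIcc c d, HasDerivAt (fun x => -(x - s)⁻¹) ((x - s) ^ 2)⁻¹ x :=
    fun x hx => (((hasDerivAt_id x).sub_const s).inv (hne x hx)).neg.congr_deriv
      (by rw [neg_div, neg_neg, one_div, id])
  rw [integral_eq_sub_of_hasDerivAt hderiv
    (ContinuousOn.intervalIntegrable <| ContinuousOn.inv₀ (by fun_prop) fun x hx =>
      pow_ne_zero 2 (hne x hx))]
  ring

theorem integral_div_sub_sq_of_eq_taylor {f R : ℝ → ℝ} {c d s A B : ℝ} (hs : s ∉ uIcc c d)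
    (hf : ∀ x ∈ uIcc c d, f x = A + B * (x - s) + (x - s) ^ 2 * R x)
    (hR : IntervalIntegrable R volume c d) :
    ∫ x in c..d, f x / (x - s) ^ 2
      = A * ((c - s)⁻¹ - (d - s)⁻¹) + B * Real.log ((d - s) / (c - s)) + ∫ x in c..d, R x := by
  have hne : ∀ x ∈ uIcc c d, x - s ≠ 0 := fun x hx => sub_ne_zero.2 (ne_of_mem_of_not_mem hx hs)
  have hsq : IntervalIntegrable (fun x => A * ((x - s) ^ 2)⁻¹) volume c d :=
    ContinuousOn.intervalIntegrable <| continuousOn_const.mul <|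
      ContinuousOn.inv₀ (by fun_prop) fun x hx => pow_ne_zero 2 (hne x hx)
  have hlin : IntervalIntegrable (fun x => B * (x - s)⁻¹) volume c d :=
    ContinuousOn.intervalIntegrable <| continuousOn_const.mul <|
      ContinuousOn.inv₀ (by fun_prop) hne
  calc ∫ x in c..d, f x / (x - s) ^ 2
      = ∫ x in c..d, A * ((x - s) ^ 2)⁻¹ + B * (x - s)⁻¹ + R x :=
        integral_congr fun x hx => by
          rw [hf x hx]
          field_simp [hne x hx]
    _ = _ := by
      rw [integral_add (hsq.add hlin) hR, integral_add hsq hlin,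
        intervalIntegral.integral_const_mul, intervalIntegral.integral_const_mul,
        integral_inv_sub_sq hs, integral_inv_sub hs]

theorem tendsto_integral_add_integral_of_mem_Ioo {G : ℝ → ℝ} {a b s : ℝ} (hs : s ∈ Ioo a b)
    (hG : IntervalIntegrable G volume a b) :
    Tendsto (fun ε => (∫ x in a..(s - ε), G x) + ∫ x in (s + ε)..b, G x) (𝓝 0)
      (𝓝 (∫ x in a..b, G x)) := by
  set F : ℝ → ℝ := fun y => ∫ x in a..y, G x
  have hab : uIcc a b = Icc a b := uIcc_of_le (hs.1.trans hs.2).le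
  have hF : ContinuousAt F s :=
    (continuousOn_primitive_interval' hG left_mem_uIcc).continuousAt
      (hab ▸ Icc_mem_nhds hs.1 hs.2)
  have hsub : Tendsto (fun ε : ℝ => s - ε) (𝓝 0) (𝓝 s) := by
    simpa using tendsto_const_nhds.sub (tendsto_id (x := 𝓝 (0 : ℝ)))
  have hadd : Tendsto (fun ε : ℝ => s + ε) (𝓝 0) (𝓝 s) := by
    simpa using tendsto_const_nhds.add (tendsto_id (x := 𝓝 (0 : ℝ)))
  have hlim : Tendsto (fun ε => F (s - ε) + (F b - F (s + ε))) (𝓝 0) (𝓝 (F s + (F b - F s))) :=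
    (hF.tendsto.comp hsub).add (tendsto_const_nhds.sub (hF.tendsto.comp hadd))
  rw [add_sub_cancel] at hlim
  refine hlim.congr' ?_
  filter_upwards [hadd.eventually (Icc_mem_nhds hs.1 hs.2)] with ε hε
  rw [integral_interval_sub_left hG (hG.mono_set (uIcc_subset_uIcc left_mem_uIcc (hab ▸ hε)))]

/-- Hadamard finite-part representation of the hypersingular integral
`⨍ₐᵇ u(x)/(x-s)² dx` for `u ∈ C²([a,b])` and `s ∈ (a,b)`. -/
theorem hypersingular_finite_part (a b s : ℝ) (has : a < s) (hsb : s < b)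
    (u u' u'' : ℝ → ℝ)
    (hu' : ∀ y ∈ Set.Icc a b, HasDerivAt u (u' y) y)
    (hu'' : ∀ y ∈ Set.Icc a b, HasDerivAt u' (u'' y) y)
    (hcont : ContinuousOn u'' (Set.Icc a b)) :
    Tendsto (fun ε : ℝ =>
        (∫ x in a..(s - ε), u x / (x - s) ^ 2)
        + (∫ x in (s + ε)..b, u x / (x - s) ^ 2) - 2 * u s / ε)
      (𝓝[>] 0)
      (𝓝 ((∫ x in a..b, ∫ t in (0:ℝ)..1, (1 - t) * u'' ((1 - t) * s + t * x))
        - u s * (1 / (b - s) + 1 / (s - a))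
        + u' s * Real.log ((b - s) / (s - a)))) := by
  set G : ℝ → ℝ := fun x => ∫ t in (0 : ℝ)..1, (1 - t) * u'' ((1 - t) * s + t * x)
  have hs : s ∈ Icc a b := ⟨has.le, hsb.le⟩
  have hab : uIcc a b = Icc a b := uIcc_of_le (has.trans hsb).le
  have htaylor : ∀ x ∈ uIcc a b, u x = u s + u' s * (x - s) + (x - s) ^ 2 * G x := fun x hx =>
    have hsub := uIcc_subset_Icc hs (hab ▸ hx)
    taylor_integral_remainder_two_of_hasDerivAt (fun y hy => hu' y (hsub hy))
      (fun y hy => hu'' y (hsub hy)) (hcont.mono hsub)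
  have hG : IntervalIntegrable G volume a b :=
    (continuousOn_integral_comp_convex_combination hcont hs).intervalIntegrable_of_Icc
      (has.trans hsb).le
  have hsplit : ∀ᶠ ε in 𝓝[>] 0,
      (∫ x in a..(s - ε), u x / (x - s) ^ 2) + (∫ x in (s + ε)..b, u x / (x - s) ^ 2)
        - 2 * u s / ε
      = (∫ x in a..(s - ε), G x) + (∫ x in (s + ε)..b, G x)
        - u s * (1 / (b - s) + 1 / (s - a)) + u' s * Real.log ((b - s) / (s - a)) := by
    filter_upwards [Ioo_mem_nhdsGT (lt_min (sub_pos.2 has) (sub_pos.2 hsb))] with ε ⟨hε, hεs⟩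
    obtain ⟨hεa, hεb⟩ := lt_min_iff.1 hεs
    have hl : uIcc a (s - ε) ⊆ uIcc a b :=
      uIcc_subset_uIcc left_mem_uIcc (hab ▸ ⟨by linarith, by linarith⟩)
    have hr : uIcc (s + ε) b ⊆ uIcc a b :=
      uIcc_subset_uIcc (hab ▸ ⟨by linarith, by linarith⟩) right_mem_uIcc
    rw [integral_div_sub_sq_of_eq_taylor (notMem_uIcc_of_gt has (by linarith))
        (fun x hx => htaylor x (hl hx)) (hG.mono_set hl),
      integral_div_sub_sq_of_eq_taylor (notMem_uIcc_of_lt (by linarith) hsb)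
        (fun x hx => htaylor x (hr hx)) (hG.mono_set hr),
      sub_sub_cancel_left, add_sub_cancel_left, ← neg_sub s a, neg_div_neg_eq,
      Real.log_div hε.ne' (by linarith), Real.log_div (by linarith) hε.ne',
      Real.log_div (by linarith) (by linarith), inv_neg]
    ring
  exact ((((tendsto_integral_add_integral_of_mem_Ioo ⟨has, hsb⟩ hG).mono_left
    nhdsWithin_le_nhds).sub_const _).add_const _).congr' (hsplit.mono fun _ h => h.symm)
end

section
/- Let u : ℝᵈ → ℝ be bounded with ∫_{‖y−x‖ ≥ r₀} |u(x)−u(y)|/‖x−y‖^{d+α} dy < ∞ for some r₀ > 0, 0 < α < 2. Then ∫_{‖y−x‖ ≥ r₀} (u(x)−u(y))/‖x−y‖^{d+α} dy = (|S^{d−1}| r₀^{−α})/(2α) · E_{ξ,η∼Beta(α,1)}[2u(x) − u(x − (r₀/η)ξ) − u(x + (r₀/η)ξ)], where ξ is uniform on S^{d−1}. -/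
/-!
Writing `y = x ± z` and averaging the two substitutions turns the integrand into the second
difference `(2u(x) - u(x - z) - u(x + z)) / ‖z‖^(d+α)` on `‖z‖ ≥ r₀`. In polar coordinates
`z = r ξ` the radial weight is `r^(d-1) / r^(d+α) = r^(-1-α)` on `r > r₀`, and the substitution
`η = r₀ / r`, which maps `(r₀, ∞)` onto `(0, 1)`, turns `r^(-1-α) dr` into `r₀^(-α) / α` times
the `Beta(α, 1)` density `α η^(α-1) dη`.
-/

open MeasureTheory Set Metric Module

section Symmetrization

variable {G : Type*} [NormedAddCommGroup G]

lemma preimage_add_left_compl_ball (x : G) (r : ℝ) : (x + ·) ⁻¹' (ball x r)ᶜ = (ball 0 r)ᶜ := by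
  simp [preimage_add_ball]

lemma preimage_sub_left_compl_ball (x : G) (r : ℝ) : (x - ·) ⁻¹' (ball x r)ᶜ = (ball 0 r)ᶜ := by
  ext z
  simp [dist_eq_norm]

variable [MeasurableSpace G] [BorelSpace G] {μ : Measure G} [μ.IsAddLeftInvariant]
  {F : Type*} [NormedAddCommGroup F] {f : G → F} {x : G} {r : ℝ}

lemma MeasureTheory.IntegrableOn.comp_add_left_compl_ball (hf : IntegrableOn f (ball x r)ᶜ μ) :
    IntegrableOn (fun z ↦ f (x + z)) (ball 0 r)ᶜ μ := by
  rw [← preimage_add_left_compl_ball x r]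
  exact (measurePreserving_add_left μ x).integrableOn_comp_preimage
    (measurableEmbedding_addLeft x) |>.2 hf

variable [μ.IsNegInvariant]

lemma MeasureTheory.IntegrableOn.comp_sub_left_compl_ball (hf : IntegrableOn f (ball x r)ᶜ μ) :
    IntegrableOn (fun z ↦ f (x - z)) (ball 0 r)ᶜ μ := by
  rw [← preimage_sub_left_compl_ball x r]
  exact (Measure.measurePreserving_sub_left μ x).integrableOn_comp_preimage
    (measurableEmbedding_subLeft x) |>.2 hf

theorem setIntegral_compl_ball_eq_half_setIntegral_add_sub [NormedSpace ℝ F]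
    (hf : IntegrableOn f (ball x r)ᶜ μ) :
    ∫ y in (ball x r)ᶜ, f y ∂μ = (1 / 2 : ℝ) • ∫ z in (ball 0 r)ᶜ, (f (x + z) + f (x - z)) ∂μ := by
  have hadd := (measurePreserving_add_left μ x).setIntegral_preimage_emb
    (measurableEmbedding_addLeft x) f (ball x r)ᶜ
  have hsub := (Measure.measurePreserving_sub_left μ x).setIntegral_preimage_emb
    (measurableEmbedding_subLeft x) f (ball x r)ᶜ
  rw [preimage_add_left_compl_ball] at hadd
  rw [preimage_sub_left_compl_ball] at hsub
  rw [integral_add hf.comp_add_left_compl_ball hf.comp_sub_left_compl_ball, hadd, hsub,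
    ← two_smul ℝ, smul_smul]
  norm_num

end Symmetrization

lemma pow_pred_mul_div_rpow_natCast_add {n : ℕ} (hn : 0 < n) {r : ℝ} (hr : 0 < r) (α a : ℝ) :
    r ^ (n - 1) * (a / r ^ ((n : ℝ) + α)) = a * r ^ (-1 - α) := by
  rw [← Real.rpow_natCast, Nat.cast_pred hn, mul_div_left_comm, ← Real.rpow_sub hr]
  ring_nf

section Polar

variable {E F : Type*} [NormedAddCommGroup E] [NormedSpace ℝ E] [FiniteDimensional ℝ E]
  [MeasurableSpace E] [BorelSpace E] {μ : Measure E} [μ.IsAddHaarMeasure]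
  [NormedAddCommGroup F] [NormedSpace ℝ F]

lemma MeasureTheory.Measure.integral_volumeIoiPow (n : ℕ) (f : ℝ → F) :
    ∫ r, f r ∂(Measure.volumeIoiPow n) = ∫ r in Ioi 0, r ^ n • f r := by
  simp only [Measure.volumeIoiPow, ENNReal.ofReal]
  rw [integral_withDensity_eq_integral_smul (measurable_subtype_coe.pow_const _).real_toNNReal,
    integral_subtype_comap measurableSet_Ioi fun r ↦ (r ^ n).toNNReal • f r]
  refine setIntegral_congr_fun measurableSet_Ioi fun r hr ↦ ?_
  rw [NNReal.smul_def, Real.coe_toNNReal _ (pow_nonneg (le_of_lt hr) _)]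

theorem integral_eq_integral_sphere_integral_Ioi [Nontrivial E] {f : E → F} (hf : Integrable f μ) :
    ∫ z, f z ∂μ = ∫ ξ : sphere (0 : E) 1,
      (∫ r in Ioi (0 : ℝ), r ^ (finrank ℝ E - 1) • f (r • (ξ : E))) ∂μ.toSphere := by
  have hmp := μ.measurePreserving_homeomorphUnitSphereProd
  have hemb := (homeomorphUnitSphereProd E).measurableEmbedding
  set g : sphere (0 : E) 1 × Ioi (0 : ℝ) → F := fun p ↦ f (p.2.1 • p.1.1)
  have hg (z : ({0}ᶜ : Set E)) : g (homeomorphUnitSphereProd E z) = f z := by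
    simp [g, smul_inv_smul₀ (norm_ne_zero_iff.2 z.2)]
  have hgint : Integrable g (μ.toSphere.prod (.volumeIoiPow (finrank ℝ E - 1))) := by
    rw [← hmp.integrable_comp_emb hemb, Function.comp_def]
    simp only [hg]
    refine (integrableOn_iff_comap_subtypeVal (measurableSet_singleton 0).compl).1 ?_
    rwa [IntegrableOn, restrict_compl_singleton]
  calc ∫ z, f z ∂μ = ∫ z : ({0}ᶜ : Set E), f z ∂(μ.comap (↑)) := by
        rw [integral_subtype_comap (measurableSet_singleton _).compl, restrict_compl_singleton]
    _ = ∫ p, g p ∂(μ.toSphere.prod (.volumeIoiPow (finrank ℝ E - 1))) := by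
        simp only [← hmp.integral_comp hemb, hg]
    _ = _ := by
        rw [integral_prod g hgint]
        exact integral_congr_ae
          (.of_forall fun ξ ↦ Measure.integral_volumeIoiPow _ fun r ↦ f (r • (ξ : E)))

theorem setIntegral_compl_ball_eq_integral_sphere_integral_Ioi [Nontrivial E] {f : E → F}
    {R : ℝ} (hR : 0 < R) (hf : IntegrableOn f (ball 0 R)ᶜ μ) :
    ∫ z in (ball 0 R)ᶜ, f z ∂μ = ∫ ξ : sphere (0 : E) 1,
      (∫ r in Ioi R, r ^ (finrank ℝ E - 1) • f (r • (ξ : E))) ∂μ.toSphere := by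
  have hmeas : MeasurableSet (ball (0 : E) R)ᶜ := measurableSet_ball.compl
  rw [← integral_indicator hmeas,
    integral_eq_integral_sphere_integral_Ioi ((integrable_indicator_iff hmeas).2 hf)]
  refine integral_congr_ae (.of_forall fun ξ ↦ ?_)
  have hmem (r : ℝ) (hr : 0 < r) : r • (ξ : E) ∈ (ball (0 : E) R)ᶜ ↔ r ∈ Ici R := by
    simp [norm_smul, abs_of_pos hr]
  calc ∫ r in Ioi (0 : ℝ), r ^ (finrank ℝ E - 1) • (ball 0 R)ᶜ.indicator f (r • (ξ : E))
      = ∫ r in Ioi 0, (Ici R).indicator (fun r ↦ r ^ (finrank ℝ E - 1) • f (r • (ξ : E))) r := by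
        refine setIntegral_congr_fun measurableSet_Ioi fun r hr ↦ ?_
        by_cases h : R ≤ r <;> simp [indicator, hmem r hr, h]
    _ = ∫ r in Ici R, r ^ (finrank ℝ E - 1) • f (r • (ξ : E)) := by
        rw [setIntegral_indicator measurableSet_Ici, inter_eq_right.2 (Ici_subset_Ioi.2 hR)]
    _ = _ := integral_Ici_eq_integral_Ioi

theorem setIntegral_compl_ball_div_rpow_eq_half_integral_sphere
    [Nontrivial E] {u : E → ℝ} {x : E} {r₀ α : ℝ} (hr₀ : 0 < r₀)
    (hf : IntegrableOn (fun y ↦ (u x - u y) / ‖x - y‖ ^ ((finrank ℝ E : ℝ) + α)) (ball x r₀)ᶜ μ) :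
    ∫ y in (ball x r₀)ᶜ, (u x - u y) / ‖x - y‖ ^ ((finrank ℝ E : ℝ) + α) ∂μ
      = 1 / 2 * ∫ ξ : sphere (0 : E) 1,
          (∫ r in Ioi r₀, (2 * u x - u (x - r • (ξ : E)) - u (x + r • (ξ : E))) * r ^ (-1 - α))
          ∂μ.toSphere := by
  set K := fun y ↦ (u x - u y) / ‖x - y‖ ^ ((finrank ℝ E : ℝ) + α)
  rw [setIntegral_compl_ball_eq_half_setIntegral_add_sub hf,
    setIntegral_compl_ball_eq_integral_sphere_integral_Ioi (f := fun z ↦ K (x + z) + K (x - z)) hr₀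
      (hf.comp_add_left_compl_ball.add hf.comp_sub_left_compl_ball), smul_eq_mul]
  congr 1
  refine integral_congr_ae
    (.of_forall fun ξ ↦ setIntegral_congr_fun measurableSet_Ioi fun r hr ↦ ?_)
  have hr0 : 0 < r := hr₀.trans hr
  have hnorm : ‖r • (ξ : E)‖ = r := by simp [norm_smul, hr0.le]
  simp only [K, sub_add_cancel_left, sub_sub_cancel, norm_neg, hnorm]
  rw [smul_eq_mul, ← add_div, pow_pred_mul_div_rpow_natCast_add finrank_pos hr0]
  ring

end Polar

lemma image_div_Ioi_self {r₀ : ℝ} (hr₀ : 0 < r₀) : (r₀ / ·) '' Ioi r₀ = Ioo 0 1 := by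
  ext η
  constructor
  · rintro ⟨r, hr, rfl⟩
    exact ⟨div_pos hr₀ (hr₀.trans hr), (div_lt_one (hr₀.trans hr)).2 hr⟩
  · rintro ⟨hη₀, hη₁⟩
    refine ⟨r₀ / η, (lt_div_iff₀ hη₀).2 (by nlinarith), div_div_cancel₀ hr₀.ne'⟩

theorem intervalIntegral_comp_div_mul_rpow {r₀ : ℝ} (hr₀ : 0 < r₀) (α : ℝ) (F : ℝ → ℝ) :
    ∫ η in (0 : ℝ)..1, F (r₀ / η) * (α * η ^ (α - 1))
      = α * r₀ ^ α * ∫ r in Ioi r₀, F r * r ^ (-1 - α) := by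
  have hderiv (r : ℝ) (hr : r ∈ Ioi r₀) :
      HasDerivWithinAt (r₀ / ·) (-(r₀ / r ^ 2)) (Ioi r₀) r := by
    simpa [div_eq_mul_inv] using
      ((hasDerivAt_inv (hr₀.trans hr).ne').const_mul r₀).hasDerivWithinAt
  have hinj : InjOn (r₀ / ·) (Ioi r₀) := fun a ha b hb h ↦ by
    simpa [hr₀.ne'] using (div_eq_div_iff_comm ..).1 h
  rw [intervalIntegral.integral_of_le zero_le_one, integral_Ioc_eq_integral_Ioo,
    ← image_div_Ioi_self hr₀,
    integral_image_eq_integral_abs_deriv_smul measurableSet_Ioi hderiv hinj,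
    ← integral_const_mul]
  refine setIntegral_congr_fun measurableSet_Ioi fun r hr ↦ ?_
  have hr0 : 0 < r := hr₀.trans hr
  have hpow : r ^ (-1 - α) = (r ^ α * r)⁻¹ := by
    rw [show -1 - α = -(α + 1) by ring, Real.rpow_neg hr0.le, Real.rpow_add_one hr0.ne']
  have : 0 < r ^ α := Real.rpow_pos_of_pos hr0 α
  rw [abs_neg, abs_of_pos (by positivity), div_div_cancel₀ hr₀.ne', Real.div_rpow hr₀.le hr0.le,
    Real.rpow_sub_one hr₀.ne', Real.rpow_sub_one hr0.ne', hpow, smul_eq_mul]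
  field_simp

theorem fractional_outer_expectation_general (d : ℕ) (hd : 0 < d)
    (u : EuclideanSpace ℝ (Fin d) → ℝ) (hu : Continuous u)
    (x : EuclideanSpace ℝ (Fin d)) (r₀ α : ℝ) (hr₀ : 0 < r₀)
    (hα0 : 0 < α)
    (hint : IntegrableOn (fun y => |u x - u y| / ‖x - y‖ ^ ((d:ℝ) + α))
      (Metric.ball x r₀)ᶜ)
    (S : ℝ)
    (hS : S = (((volume : Measure (EuclideanSpace ℝ (Fin d))).toSphere) Set.univ).toReal) :
    ∫ y in (Metric.ball x r₀)ᶜ, (u x - u y) / ‖x - y‖ ^ ((d:ℝ) + α)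
      = (S * r₀ ^ (-α) / (2 * α)) *
        ((1 / S) * ∫ ξ : Metric.sphere (0 : EuclideanSpace ℝ (Fin d)) 1,
          (∫ η in (0:ℝ)..1,
            (2 * u x - u (x - (r₀ / η) • (ξ : EuclideanSpace ℝ (Fin d)))
              - u (x + (r₀ / η) • (ξ : EuclideanSpace ℝ (Fin d)))) *
            (α * η ^ (α - 1)))
          ∂((volume : Measure (EuclideanSpace ℝ (Fin d))).toSphere)) := by
  have : Nonempty (Fin d) := ⟨⟨0, hd⟩⟩
  have hf : IntegrableOn (fun y ↦ (u x - u y) / ‖x - y‖ ^ ((d : ℝ) + α)) (ball x r₀)ᶜ := by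
    have hum := hu.measurable
    refine hint.congr' (by fun_prop : Measurable _).aestronglyMeasurable (.of_forall fun y ↦ ?_)
    simp
  have hS0 : S ≠ 0 := by
    rw [hS]
    exact (ENNReal.toReal_pos (Measure.measure_univ_ne_zero.2 (Measure.toSphere_ne_zero _))
      (measure_ne_top _ _)).ne'
  have hinner (ξ : sphere (0 : EuclideanSpace ℝ (Fin d)) 1) :=
    intervalIntegral_comp_div_mul_rpow hr₀ α fun r ↦
      2 * u x - u (x - r • (ξ : EuclideanSpace ℝ (Fin d))) - u (x + r • (ξ : EuclideanSpace ℝ (Fin d)))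
  have hdim : (d : ℝ) = finrank ℝ (EuclideanSpace ℝ (Fin d)) := by simp
  rw [hdim] at hf ⊢
  rw [setIntegral_compl_ball_div_rpow_eq_half_integral_sphere hr₀ hf]
  simp only [hinner, integral_const_mul, Real.rpow_neg hr₀.le]
  have : 0 < r₀ ^ α := Real.rpow_pos_of_pos hr₀ α
  field_simp

/-- Monte Carlo representation of the outer part of the fractional Laplacian:
`∫_{‖y−x‖ ≥ r₀} (u(x)−u(y))/‖x−y‖^{d+α} dy
  = (|S^{d−1}| r₀^{−α})/(2α) · E_{ξ,η∼Beta(α,1)}[2u(x) − u(x−(r₀/η)ξ) − u(x+(r₀/η)ξ)]`,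
where `ξ` is uniform on the unit sphere and `Beta(α,1)` has density `α t^{α−1}`
on `(0,1)`. -/
theorem fractional_outer_expectation (d : ℕ) (hd : 0 < d)
    (u : EuclideanSpace ℝ (Fin d) → ℝ) (hu : Continuous u)
    (C : ℝ) (hub : ∀ y, |u y| ≤ C)
    (x : EuclideanSpace ℝ (Fin d)) (r₀ α : ℝ) (hr₀ : 0 < r₀)
    (hα0 : 0 < α) (hα2 : α < 2)
    (hint : IntegrableOn (fun y => |u x - u y| / ‖x - y‖ ^ ((d:ℝ) + α))
      (Metric.ball x r₀)ᶜ)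
    (S : ℝ)
    (hS : S = (((volume : Measure (EuclideanSpace ℝ (Fin d))).toSphere) Set.univ).toReal) :
    ∫ y in (Metric.ball x r₀)ᶜ, (u x - u y) / ‖x - y‖ ^ ((d:ℝ) + α)
      = (S * r₀ ^ (-α) / (2 * α)) *
        ((1 / S) * ∫ ξ : Metric.sphere (0 : EuclideanSpace ℝ (Fin d)) 1,
          (∫ η in (0:ℝ)..1,
            (2 * u x - u (x - (r₀ / η) • (ξ : EuclideanSpace ℝ (Fin d)))
              - u (x + (r₀ / η) • (ξ : EuclideanSpace ℝ (Fin d)))) *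
            (α * η ^ (α - 1)))
          ∂((volume : Measure (EuclideanSpace ℝ (Fin d))).toSphere)) :=
  fractional_outer_expectation_general d hd u hu x r₀ α hr₀ hα0 hint S hS
end

section
/- For 0 < α < 1, the function u(x) = sin(x)/√x (extended by u(0)=0) satisfies that the weakly singular integral ∫₀ˣ (x−s)^{−1/2} u(s) ds = π sin(x/2) J₀(x/2) for all x > 0, where J₀ is the Bessel function of the first kind of order zero. -/
/-!
Substituting `s = x/2 · (1 - cos θ)` gives `√(x - s) · √s = x/2 · sin θ = ds/dθ`, so the weakly
singular integral becomes `∫₀^π sin (x/2 · (1 - cos θ)) dθ`. Writing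
`sin a · cos (a cos θ) = (sin (a (1 + cos θ)) + sin (a (1 - cos θ))) / 2` and reflecting
`θ ↦ π - θ`, this equals `sin (x/2) · ∫₀^π cos (x/2 · cos θ) dθ`, and the last integral is
`π J₀(x/2)`: integrate the cosine series termwise against the Wallis integrals `∫₀^π cos^{2k}`.
-/

open MeasureTheory intervalIntegral

/-- The Bessel function of the first kind of order zero,
`J₀(z) = Σ_{k≥0} (−z²)^k / ((k!)² 4^k)`. -/
noncomputable def besselJ0 (z : ℝ) : ℝ :=
  ∑' k : ℕ, (-(z ^ 2)) ^ k / ((k.factorial : ℝ) ^ 2 * 4 ^ k)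

open Real Set Nat

theorem integral_cos_pow_even (k : ℕ) :
    ∫ θ in (0:ℝ)..π, cos θ ^ (2 * k) = π * (2 * k)! / ((k ! : ℝ) ^ 2 * 4 ^ k) := by
  induction k with
  | zero => simp
  | succ n ih =>
    rw [show 2 * (n + 1) = 2 * n + 2 by ring, integral_cos_pow, ih]
    simp only [sin_pi, sin_zero, mul_zero, sub_zero, zero_div, zero_add]
    push_cast [Nat.factorial_succ, pow_succ]
    field_simp
    ring

theorem integral_cos_mul_cos_eq_pi_mul_besselJ0 (z : ℝ) :
    ∫ θ in (0:ℝ)..π, cos (z * cos θ) = π * besselJ0 z := by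
  have hterm : ∀ k : ℕ, ∫ θ in (0:ℝ)..π, (-1) ^ k * (z * cos θ) ^ (2 * k) / (2 * k)!
      = π * ((-(z ^ 2)) ^ k / ((k ! : ℝ) ^ 2 * 4 ^ k)) := by
    intro k
    have hfactor (θ : ℝ) : (-1) ^ k * (z * cos θ) ^ (2 * k) / (2 * k)!
        = (-1) ^ k * z ^ (2 * k) / (2 * k)! * cos θ ^ (2 * k) := by ring
    simp_rw [hfactor, intervalIntegral.integral_const_mul, integral_cos_pow_even]
    rw [neg_pow (z ^ 2), ← pow_mul]
    field_simp
  have hseries :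
      HasSum (fun k : ℕ => ∫ θ in (0:ℝ)..π, (-1) ^ k * (z * cos θ) ^ (2 * k) / (2 * k)!)
        (∫ θ in (0:ℝ)..π, cos (z * cos θ)) := by
    refine hasSum_integral_of_dominated_convergence (fun k _ => |z| ^ (2 * k) / (2 * k)!)
      (fun k => by fun_prop) (fun k => .of_forall fun θ _ => ?_)
      (.of_forall fun θ _ => (Real.hasSum_cosh |z|).summable) intervalIntegrable_const
      (.of_forall fun θ _ => Real.hasSum_cos _)
    rw [norm_div, norm_mul, norm_pow, norm_pow, norm_neg, norm_one, one_pow, one_mul,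
      Real.norm_natCast, Real.norm_eq_abs, abs_mul]
    gcongr
    exact mul_le_of_le_one_right (abs_nonneg z) (abs_cos_le_one θ)
  rw [← hseries.tsum_eq, funext hterm, tsum_mul_left, besselJ0]

theorem integral_half_mul_sin_smul_comp_one_sub_cos {E : Type*} [NormedAddCommGroup E]
    [NormedSpace ℝ E] {x : ℝ} (hx : 0 ≤ x) (g : ℝ → E) :
    ∫ θ in (0:ℝ)..π, (x / 2 * sin θ) • g (x / 2 * (1 - cos θ)) = ∫ s in (0:ℝ)..x, g s := by
  have hderiv (θ : ℝ) : HasDerivAt (fun θ => x / 2 * (1 - cos θ)) (x / 2 * sin θ) θ := by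
    simpa using ((hasDerivAt_cos θ).const_sub 1).const_mul (x / 2)
  rw [integral_of_le pi_pos.le, integral_of_le hx, ← integral_Icc_eq_integral_Ioc,
    ← integral_Icc_eq_integral_Ioc,
    integral_Icc_deriv_smul_of_deriv_nonneg (by fun_prop) (fun θ _ => hderiv θ)
      (fun θ hθ => mul_nonneg (by positivity) (sin_nonneg_of_mem_Icc (Ioo_subset_Icc_self hθ)))
      pi_pos.le]
  norm_num

theorem integral_sub_rpow_neg_half_mul_div_sqrt {x : ℝ} (hx : 0 < x) (f : ℝ → ℝ) :
    ∫ s in (0:ℝ)..x, (x - s) ^ (-(1:ℝ)/2) * (f s / √s)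
      = ∫ θ in (0:ℝ)..π, f (x / 2 * (1 - cos θ)) := by
  rw [← integral_half_mul_sin_smul_comp_one_sub_cos hx.le, integral_of_le pi_pos.le,
    integral_of_le pi_pos.le, integral_Ioc_eq_integral_Ioo, integral_Ioc_eq_integral_Ioo]
  refine setIntegral_congr_fun measurableSet_Ioo fun θ hθ => ?_
  set s := x / 2 * (1 - cos θ)
  have hsin : 0 < sin θ := sin_pos_of_pos_of_lt_pi hθ.1 hθ.2
  have hcos : |cos θ| < 1 := by
    rw [← sq_lt_one_iff_abs_lt_one]
    nlinarith [sin_sq_add_cos_sq θ]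
  have hs : 0 < s := mul_pos (by positivity) (by linarith [(abs_lt.mp hcos).2])
  have hxs : 0 < x - s := by
    rw [show x - s = x / 2 * (1 + cos θ) by ring]
    exact mul_pos (by positivity) (by linarith [(abs_lt.mp hcos).1])
  have hsqrt : √(x - s) * √s = x / 2 * sin θ := by
    rw [← sqrt_mul hxs.le, ← sqrt_sq (by positivity : 0 ≤ x / 2 * sin θ)]
    congr 1
    linear_combination (-(x ^ 2) / 4) * sin_sq_add_cos_sq θ
  rw [smul_eq_mul, ← hsqrt, show (-(1:ℝ)/2) = -(1/2) by ring, rpow_neg hxs.le, ← sqrt_eq_rpow]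
  field_simp

theorem sin_mul_integral_cos_mul_cos (a : ℝ) :
    sin a * ∫ θ in (0:ℝ)..π, cos (a * cos θ) = ∫ θ in (0:ℝ)..π, sin (a * (1 - cos θ)) := by
  have hreflect :
      ∫ θ in (0:ℝ)..π, sin (a * (1 + cos θ)) = ∫ θ in (0:ℝ)..π, sin (a * (1 - cos θ)) := by
    have h := integral_comp_sub_left (a := 0) (b := π) (fun θ => sin (a * (1 - cos θ))) π
    simp only [cos_pi_sub, sub_neg_eq_add, sub_self, sub_zero] at h
    exact h
  have hsplit (θ : ℝ) :
      sin a * cos (a * cos θ) = (sin (a * (1 + cos θ)) + sin (a * (1 - cos θ))) / 2 := by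
    rw [mul_add, mul_sub, mul_one, sin_add, sin_sub]; ring
  rw [← intervalIntegral.integral_const_mul, funext hsplit, intervalIntegral.integral_div,
    intervalIntegral.integral_add (Continuous.intervalIntegrable (by fun_prop) _ _)
      (Continuous.intervalIntegrable (by fun_prop) _ _), hreflect]
  ring

/-- The weakly singular Volterra identity
`∫₀ˣ (x−s)^{−1/2} sin(s)/√s ds = π sin(x/2) J₀(x/2)` for `x > 0`. -/
theorem weakly_singular_bessel_identity (x : ℝ) (hx : 0 < x) :
    ∫ s in (0:ℝ)..x, (x - s) ^ (-(1:ℝ)/2) * (Real.sin s / Real.sqrt s)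
      = Real.pi * Real.sin (x / 2) * besselJ0 (x / 2) := by
  rw [integral_sub_rpow_neg_half_mul_div_sqrt hx, ← sin_mul_integral_cos_mul_cos,
    integral_cos_mul_cos_eq_pi_mul_besselJ0]
  ring
end
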